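/- Let A be a unital Banach algebra, A₀, B ∈ A with A₀ invertible, and L(x,t) = exp(A₀ x + A₀³ t) B. On the set where I ± L are invertible, Q := (I - L)⁻¹ A₀⁻¹ (I + L) satisfies the meta-mKdV equation Q_t = Q_xxx - 3 Q_xx Q⁻¹ Q_x. -/

import Mathlib

variable {A : Type*} [NormedRing A] [NormedAlgebra ℝ A] [CompleteSpace A]

/-- partial derivative in the first (space) variable -/
noncomputable def px (Q : ℝ × ℝ → A) : ℝ × ℝ → A := fun p => deriv (fun x => Q (x, p.2)) p.1

/-- partial derivative in the second (time) variable -/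
noncomputable def pt (Q : ℝ × ℝ → A) : ℝ × ℝ → A := fun p => deriv (fun t => Q (p.1, t)) p.2

/-!
Along a line on which `L' = C L` (`C = A₀` in `x`, `C = A₀³` in `t`), `N = (I - L)⁻¹` satisfies
`N' = N C (N - I)`, hence `Q' = N C (Q - A₀⁻¹)`. In `x`, `G = N A₀` solves the Riccati equation
`G' = G (G - A₀)` and `W = Q - A₀⁻¹` solves `W' = G W`, so every `x`-derivative of `Q` is a
noncommutative polynomial in `G` and `A₀` times `W`, while `Q_t = G A₀² W`. The equation reduces to
`(2G - A₀) W Q⁻¹ G = 2G² - A₀G - GA₀`, which follows from `Q⁻¹ G = (I + L)⁻¹ A₀²` and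
`(I - L)⁻¹ + (I + L)⁻¹ = 2 (I - L)⁻¹ (I + L)⁻¹`.
-/

open scoped Ring

/-- In this notation the paper's `Q` is `cayley A₀⁻¹ L`. -/
noncomputable def cayley {R : Type*} [Ring R] (a ℓ : R) : R :=
  (1 - ℓ)⁻¹ʳ * a * (1 + ℓ)

section Algebra

variable {R : Type*} [Ring R] {ℓ : R}

theorem mul_inverse_one_sub (h : IsUnit (1 - ℓ)) : ℓ * (1 - ℓ)⁻¹ʳ = (1 - ℓ)⁻¹ʳ - 1 := by
  have := Ring.mul_inverse_cancel _ h
  rw [sub_mul, one_mul] at this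
  exact eq_sub_of_add_eq (sub_eq_iff_eq_add'.mp this).symm

theorem inverse_one_sub_add_inverse_one_add (hsub : IsUnit (1 - ℓ)) (hadd : IsUnit (1 + ℓ)) :
    (1 - ℓ)⁻¹ʳ + (1 + ℓ)⁻¹ʳ = 2 * ((1 - ℓ)⁻¹ʳ * (1 + ℓ)⁻¹ʳ) := by
  calc (1 - ℓ)⁻¹ʳ + (1 + ℓ)⁻¹ʳ
      = (1 - ℓ)⁻¹ʳ * ((1 + ℓ) + (1 - ℓ)) * (1 + ℓ)⁻¹ʳ := by
        rw [mul_add, add_mul, Ring.mul_inverse_cancel_right _ _ hadd,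
          Ring.inverse_mul_cancel _ hsub, one_mul]
    _ = 2 * ((1 - ℓ)⁻¹ʳ * (1 + ℓ)⁻¹ʳ) := by
        rw [add_add_sub_cancel, one_add_one_eq_two, ← (Commute.ofNat_right _ 2).eq]
        noncomm_ring

theorem isUnit_cayley (u : Rˣ) (hsub : IsUnit (1 - ℓ)) (hadd : IsUnit (1 + ℓ)) :
    IsUnit (cayley ↑u⁻¹ ℓ) :=
  (hsub.ringInverse.mul u⁻¹.isUnit).mul hadd

theorem inverse_cayley (u : Rˣ) (hsub : IsUnit (1 - ℓ)) :
    (cayley ↑u⁻¹ ℓ)⁻¹ʳ = (1 + ℓ)⁻¹ʳ * u * (1 - ℓ) := by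
  rw [cayley, Ring.inverse_mul (.inl (hsub.ringInverse.mul u⁻¹.isUnit)),
    Ring.inverse_mul (.inr u⁻¹.isUnit), Ring.inverse_unit, inv_inv, Ring.inverse_inverse hsub,
    mul_assoc]

theorem two_mul_sub_mul_cayley_sub_mul_inverse_mul (u : Rˣ) (hsub : IsUnit (1 - ℓ))
    (hadd : IsUnit (1 + ℓ)) :
    (2 * ((1 - ℓ)⁻¹ʳ * u) - u) * (cayley ↑u⁻¹ ℓ - ↑u⁻¹) * (cayley ↑u⁻¹ ℓ)⁻¹ʳ *
        ((1 - ℓ)⁻¹ʳ * u) =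
      2 * ((1 - ℓ)⁻¹ʳ * u) * ((1 - ℓ)⁻¹ʳ * u) - u * ((1 - ℓ)⁻¹ʳ * u) - (1 - ℓ)⁻¹ʳ * u * u := by
  have hQ := Ring.mul_inverse_cancel _ (isUnit_cayley u hsub hadd)
  have hQG : (cayley ↑u⁻¹ ℓ)⁻¹ʳ * ((1 - ℓ)⁻¹ʳ * u) = (1 + ℓ)⁻¹ʳ * u * u := by
    rw [inverse_cayley u hsub]
    simp only [mul_assoc, Ring.mul_inverse_cancel_left _ _ hsub]
  have hNM := inverse_one_sub_add_inverse_one_add hsub hadd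
  have hu := u.mul_inv
  generalize cayley ↑u⁻¹ ℓ = Q at *
  generalize (1 - ℓ)⁻¹ʳ = N at *
  generalize (1 + ℓ)⁻¹ʳ = M at *
  generalize (↑u⁻¹ : R) = a at *
  generalize (u : R) = v at *
  calc (2 * (N * v) - v) * (Q - a) * Q⁻¹ʳ * (N * v)
      = (2 * (N * v) - v) * (Q * Q⁻¹ʳ * (N * v) - a * (Q⁻¹ʳ * (N * v))) := by noncomm_ring
    _ = 2 * (N * v) * (N * v) - v * (N * v) - 2 * N * (v * a) * M * v * v +
          (v * a) * M * v * v := by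
        rw [hQ, one_mul, hQG]
        noncomm_ring
    _ = 2 * (N * v) * (N * v) - v * (N * v) - N * v * v := by
        rw [hu, show 2 * N * 1 * M * v * v = 2 * (N * M) * v * v by noncomm_ring, ← hNM]
        noncomm_ring

end Algebra

section Calculus

variable {𝕜 R : Type*} [NontriviallyNormedField 𝕜] [NormedRing R] [NormedAlgebra 𝕜 R]

theorem hasDerivAt_deriv_of_isOpen {f f' : 𝕜 → R} {f'' : R} {s : Set 𝕜} {x : 𝕜} (hs : IsOpen s)
    (hf : ∀ y ∈ s, HasDerivAt f (f' y) y) (hx : x ∈ s) (hf' : HasDerivAt f' f'' x) :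
    HasDerivAt (deriv f) f'' x :=
  hf'.congr_of_eventuallyEq <| Filter.eventually_of_mem (hs.mem_nhds hx) fun y hy => (hf y hy).deriv

section Riccati

variable {G W : 𝕜 → R} {c : R} {x : 𝕜}

theorem HasDerivAt.mul_of_riccati (hG : HasDerivAt G (G x * (G x - c)) x)
    (hW : HasDerivAt W (G x * W x) x) :
    HasDerivAt (fun y => G y * W y) (G x * (2 * G x - c) * W x) x := by
  refine (hG.mul hW).congr_deriv ?_
  noncomm_ring

theorem HasDerivAt.mul_mul_of_riccati (hG : HasDerivAt G (G x * (G x - c)) x)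
    (hW : HasDerivAt W (G x * W x) x) :
    HasDerivAt (fun y => G y * (2 * G y - c) * W y)
      (G x * (6 * G x * G x - 3 * c * G x - 3 * G x * c + c * c) * W x) x := by
  refine ((hG.mul ((hG.const_mul 2).sub_const c)).mul hW).congr_deriv ?_
  simp only [Pi.mul_apply]
  noncomm_ring

end Riccati

variable [HasSummableGeomSeries R]

theorem HasDerivAt.ringInverse {f : 𝕜 → R} {f' : R} {x : 𝕜} (hf : HasDerivAt f f' x)
    (hx : IsUnit (f x)) :
    HasDerivAt (fun y => (f y)⁻¹ʳ) (-((f x)⁻¹ʳ * f' * (f x)⁻¹ʳ)) x := by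
  obtain ⟨u, hu⟩ := hx
  have := ((hu ▸ hasFDerivAt_ringInverse (𝕜 := 𝕜) u).comp x hf.hasFDerivAt).hasDerivAt
  simpa [← hu, Ring.inverse_unit, Function.comp_def] using this

variable {ℓ : 𝕜 → R} {C : R} {x : 𝕜}

theorem hasDerivAt_inverse_one_sub (hℓ : HasDerivAt ℓ (C * ℓ x) x) (hx : IsUnit (1 - ℓ x)) :
    HasDerivAt (fun y => (1 - ℓ y)⁻¹ʳ) ((1 - ℓ x)⁻¹ʳ * C * ((1 - ℓ x)⁻¹ʳ - 1)) x := by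
  refine ((hℓ.const_sub 1).ringInverse hx).congr_deriv ?_
  rw [← mul_inverse_one_sub hx]
  noncomm_ring

theorem hasDerivAt_cayley {a : R} (ha : Commute a C) (hℓ : HasDerivAt ℓ (C * ℓ x) x)
    (hx : IsUnit (1 - ℓ x)) :
    HasDerivAt (fun y => cayley a (ℓ y)) ((1 - ℓ x)⁻¹ʳ * C * (cayley a (ℓ x) - a)) x := by
  refine (((hasDerivAt_inverse_one_sub hℓ hx).mul_const a).mul (hℓ.const_add 1)).congr_deriv ?_
  rw [cayley, mul_assoc _ a (C * ℓ x), ha.left_comm]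
  noncomm_ring

theorem mkdv_rhs_cayley_comp (u : Rˣ) (hℓ : ∀ y, HasDerivAt ℓ (↑u * ℓ y) y)
    (hsub : IsUnit (1 - ℓ x)) (hadd : IsUnit (1 + ℓ x)) :
    deriv (deriv (deriv (cayley ↑u⁻¹ ∘ ℓ))) x -
        3 * (deriv (deriv (cayley ↑u⁻¹ ∘ ℓ)) x * (cayley ↑u⁻¹ (ℓ x))⁻¹ʳ *
          deriv (cayley ↑u⁻¹ ∘ ℓ) x) =
      (1 - ℓ x)⁻¹ʳ * ↑u ^ 3 * (cayley ↑u⁻¹ (ℓ x) - ↑u⁻¹) := by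
  set S := {y | IsUnit (1 - ℓ y)}
  have hS : IsOpen S := Units.isOpen.preimage
    (continuous_const.sub (continuous_iff_continuousAt.2 fun y => (hℓ y).continuousAt))
  let G y := (1 - ℓ y)⁻¹ʳ * (u : R)
  let W y := cayley ↑u⁻¹ (ℓ y) - ↑u⁻¹
  have hG : ∀ y ∈ S, HasDerivAt G (G y * (G y - u)) y := fun y hy =>
    ((hasDerivAt_inverse_one_sub (hℓ y) hy).mul_const _).congr_deriv <| by
      simp only [G]; noncomm_ring
  have h1 : ∀ y ∈ S, HasDerivAt (cayley ↑u⁻¹ ∘ ℓ) (G y * W y) y := fun y hy =>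
    hasDerivAt_cayley (Commute.refl (u : R)).units_inv_left (hℓ y) hy
  have hW : ∀ y ∈ S, HasDerivAt W (G y * W y) y := fun y hy => (h1 y hy).sub_const _
  have h2 : ∀ y ∈ S, HasDerivAt (deriv (cayley ↑u⁻¹ ∘ ℓ)) (G y * (2 * G y - u) * W y) y :=
    fun y hy => hasDerivAt_deriv_of_isOpen hS h1 hy ((hG y hy).mul_of_riccati (hW y hy))
  have h3 := hasDerivAt_deriv_of_isOpen hS h2 hsub ((hG x hsub).mul_mul_of_riccati (hW x hsub))
  rw [h3.deriv, (h2 x hsub).deriv, (h1 x hsub).deriv]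
  rw [show (1 - ℓ x)⁻¹ʳ * ↑u ^ 3 * (cayley ↑u⁻¹ (ℓ x) - ↑u⁻¹) = G x * u * u * W x by
    simp only [G, W]; noncomm_ring]
  have key : (2 * G x - u) * W x * (cayley ↑u⁻¹ (ℓ x))⁻¹ʳ * G x =
      2 * G x * G x - u * G x - G x * u :=
    two_mul_sub_mul_cayley_sub_mul_inverse_mul u hsub hadd
  clear_value G W
  calc G x * (6 * G x * G x - 3 * u * G x - 3 * G x * u + u * u) * W x -
        3 * (G x * (2 * G x - u) * W x * (cayley ↑u⁻¹ (ℓ x))⁻¹ʳ * (G x * W x))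
      = G x * (6 * G x * G x - 3 * u * G x - 3 * G x * u + u * u) * W x -
        3 * (G x * ((2 * G x - u) * W x * (cayley ↑u⁻¹ (ℓ x))⁻¹ʳ * G x) * W x) := by
        noncomm_ring
    _ = G x * u * u * W x := by
        rw [key]
        noncomm_ring

end Calculus

theorem hasDerivAt_exp_smul_add_mul {𝕂 𝔸 : Type*} [RCLike 𝕂] [NormedRing 𝔸] [NormedAlgebra 𝕂 𝔸]
    [CompleteSpace 𝔸] {C D : 𝔸} (hCD : Commute C D) (B : 𝔸) (s : 𝕂) :
    HasDerivAt (fun r : 𝕂 => NormedSpace.exp (r • C + D) * B)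
      (C * (NormedSpace.exp (s • C + D) * B)) s := by
  -- `NormedSpace.exp_add_of_commute` is stated for `ℚ`-algebras
  let _ : NormedAlgebra ℚ 𝔸 := NormedAlgebra.restrictScalars ℚ 𝕂 𝔸
  have h (r : 𝕂) : NormedSpace.exp (r • C + D) = NormedSpace.exp (r • C) * NormedSpace.exp D :=
    NormedSpace.exp_add_of_commute (hCD.smul_left r)
  simp only [h]
  simpa only [mul_assoc] using (hasDerivAt_exp_smul_const' C s).mul_const (NormedSpace.exp D * B)

theorem stmt_9 (A₀ B : A) (hA : IsUnit A₀)
    (L : ℝ × ℝ → A) (hL : L = fun p : ℝ × ℝ => NormedSpace.exp (p.1 • A₀ + p.2 • A₀ ^ 3) * B)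
    (Q : ℝ × ℝ → A) (hQ : Q = fun p => Ring.inverse (1 - L p) * Ring.inverse A₀ * (1 + L p)) :
    ∀ p : ℝ × ℝ, IsUnit (1 + L p) → IsUnit (1 - L p) →
      pt Q p = px (px (px Q)) p - 3 * (px (px Q) p * Ring.inverse (Q p) * px Q p) := by
  rintro ⟨x, t⟩ hadd hsub
  obtain ⟨u, rfl⟩ := hA
  obtain rfl : Q = cayley ↑u⁻¹ ∘ L := by rw [hQ, Ring.inverse_unit]; rfl
  have hu3 : Commute (u : A) (↑u ^ 3) := (Commute.refl _).pow_right 3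
  have hspace (y : ℝ) : HasDerivAt (fun y => L (y, t)) (↑u * L (y, t)) y := by
    subst hL
    exact hasDerivAt_exp_smul_add_mul (hu3.smul_right t) B y
  have htime : HasDerivAt (fun s => L (x, s)) (↑u ^ 3 * L (x, t)) t := by
    subst hL
    simpa only [add_comm (x • (u : A))] using
      hasDerivAt_exp_smul_add_mul (hu3.symm.smul_right x) B t
  calc pt (cayley ↑u⁻¹ ∘ L) (x, t)
      = (1 - L (x, t))⁻¹ʳ * ↑u ^ 3 * (cayley ↑u⁻¹ (L (x, t)) - ↑u⁻¹) :=
        (hasDerivAt_cayley ((Commute.refl (u : A)).units_inv_left.pow_right 3) htime hsub).deriv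
    _ = _ := (mkdv_rhs_cayley_comp u hspace hsub hadd).symm
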